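/- arXiv:2211.13668 — 2 statements merged into one kernel-verified Lean document; each statement's English description precedes it below -/
import Mathlib

section
/- Let f : ℝ^{d1} × ℝ^{d2} → ℝ be differentiable with l-Lipschitz gradients, satisfying the PL condition in y with constant μ > 0, with Φ(x) = max_y f(x,y) attained and finite for every x, and with Φ differentiable satisfying ∇Φ(x) = ∇_x f(x,y') for every maximizer y'. Then for all x and y, ‖∇_x f(x,y)‖² ≤ 2κ² ‖∇_y f(x,y)‖² + 2‖∇Φ(x)‖², where κ = l/μ. -/
/-!
Under the PL inequality, gradient ascent on `f x ·` from `y` with a small step `η` has path length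
at most `‖∇_y f(x,y)‖ / (μ (1 - l η))`, because the square root of the optimality gap drops by a
fixed multiple of every step. The limit `z` has zero gradient, hence is a maximiser by PL, so
`∇Φ(x) = ∇ₓ f(x,z)`; letting `η → 0` (the maximisers form a closed set) gives a maximiser with
`‖y - z‖ ≤ ‖∇_y f(x,y)‖ / μ`. Lipschitz continuity of `∇ₓ f` in `y` then yields
`‖∇ₓ f(x,y)‖ ≤ ‖∇Φ(x)‖ + κ ‖∇_y f(x,y)‖`, and `(a + b)² ≤ 2a² + 2b²` finishes.
-/

open MeasureTheory Metric

/-- Gradient of `f` with respect to the first block of variables. -/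
noncomputable def gradx {d1 d2 : ℕ}
    (f : EuclideanSpace ℝ (Fin d1) → EuclideanSpace ℝ (Fin d2) → ℝ)
    (x : EuclideanSpace ℝ (Fin d1)) (y : EuclideanSpace ℝ (Fin d2)) :
    EuclideanSpace ℝ (Fin d1) :=
  gradient (fun x' => f x' y) x

/-- Gradient of `f` with respect to the second block of variables. -/
noncomputable def grady {d1 d2 : ℕ}
    (f : EuclideanSpace ℝ (Fin d1) → EuclideanSpace ℝ (Fin d2) → ℝ)
    (x : EuclideanSpace ℝ (Fin d1)) (y : EuclideanSpace ℝ (Fin d2)) :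
    EuclideanSpace ℝ (Fin d2) :=
  gradient (fun y' => f x y') y

open Filter Topology
open scoped Gradient

lemma sqrt_two_mul_div_le_div {a g μ : ℝ} (hμ : 0 < μ) (hg : 0 ≤ g) (hPL : 2 * μ * a ≤ g ^ 2) :
    √(2 * a / μ) ≤ g / μ :=
  Real.sqrt_le_iff.2 ⟨by positivity, by
    rw [div_pow, div_le_div_iff₀ hμ (by positivity)]; nlinarith⟩

-- Łojasiewicz's trick: on the square root of the gap, a decrease by `c g²` becomes one by `c g`.
lemma mul_le_sqrt_sub_sqrt_of_le_sub {a b c g μ : ℝ} (hμ : 0 < μ) (hb : 0 ≤ b) (hc : 0 ≤ c)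
    (hg : 0 ≤ g) (hdesc : b + c * g ^ 2 ≤ a) (hPL : 2 * μ * a ≤ g ^ 2) :
    c * g ≤ √(2 * a / μ) - √(2 * b / μ) := by
  have hba : b ≤ a := by nlinarith [mul_nonneg hc (sq_nonneg g)]
  have ha : 0 ≤ a := hb.trans hba
  set A := √(2 * a / μ)
  set B := √(2 * b / μ)
  have hA : μ * A ≤ g := (le_div_iff₀' hμ).1 (sqrt_two_mul_div_le_div hμ hg hPL)
  have hBA : B ≤ A := Real.sqrt_le_sqrt (by gcongr)
  have hsq : μ * ((A + B) * (A - B)) = 2 * (a - b) := by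
    rw [← sq_sub_sq, Real.sq_sqrt (by positivity), Real.sq_sqrt (by positivity)]
    field_simp
  have key : c * g * g ≤ (A - B) * g := by
    nlinarith [mul_le_mul_of_nonneg_right hA (sub_nonneg.2 hBA),
      mul_nonneg hμ.le (sq_nonneg (A - B))]
  rcases hg.eq_or_lt with rfl | hg
  · simpa using hBA
  · exact le_of_mul_le_mul_right key hg

theorem exists_tendsto_dist_le_of_dist_le_sub {X : Type*} [PseudoMetricSpace X]
    [CompleteSpace X] {Y : ℕ → X} {s : ℕ → ℝ} (hs : ∀ n, 0 ≤ s n)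
    (h : ∀ n, dist (Y n) (Y (n + 1)) ≤ s n - s (n + 1)) :
    ∃ z, Tendsto Y atTop (𝓝 z) ∧ dist (Y 0) z ≤ s 0 := by
  have hsum : ∀ n, ∑ k ∈ Finset.range n, (s k - s (k + 1)) ≤ s 0 := fun n => by
    rw [Finset.sum_range_sub']; linarith [hs n]
  have hd : Summable fun n => s n - s (n + 1) :=
    summable_of_sum_range_le (fun n => dist_nonneg.trans (h n)) hsum
  obtain ⟨z, hz⟩ := cauchySeq_tendsto_of_complete (cauchySeq_of_dist_le_of_summable _ h hd)
  exact ⟨z, hz, (dist_le_tsum_of_dist_le_of_tendsto₀ _ h hd hz).trans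
    (hd.tsum_le_of_sum_range_le hsum)⟩

section GradientAscent

variable {E : Type*} [NormedAddCommGroup E] [InnerProductSpace ℝ E] [CompleteSpace E]
  {u : E → ℝ} {L : ℝ}

theorem abs_sub_sub_inner_gradient_le (hu : Differentiable ℝ u) (hL : 0 ≤ L)
    (hlip : ∀ a b, ‖∇ u a - ∇ u b‖ ≤ L * ‖a - b‖) (y z : E) :
    |u z - u y - inner ℝ (∇ u y) (z - y)| ≤ L * ‖z - y‖ ^ 2 := by
  have hderiv : ∀ w, HasFDerivAt u (InnerProductSpace.toDual ℝ E (∇ u w)) w :=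
    fun w => (hu w).hasGradientAt.hasFDerivAt
  have hbound : ∀ w ∈ closedBall y ‖z - y‖,
      ‖InnerProductSpace.toDual ℝ E (∇ u w) - InnerProductSpace.toDual ℝ E (∇ u y)‖ ≤
        L * ‖z - y‖ := by
    intro w hw
    rw [← map_sub, LinearIsometryEquiv.norm_map]
    exact (hlip w y).trans (by gcongr; rwa [mem_closedBall, dist_eq_norm] at hw)
  simpa [sq, mul_assoc] using
    (convex_closedBall y ‖z - y‖).norm_image_sub_le_of_norm_hasFDerivWithin_le'
      (fun w _ => (hderiv w).hasFDerivWithinAt) hbound (mem_closedBall_self (norm_nonneg _))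
      (by simp [dist_eq_norm])

theorem add_mul_norm_gradient_sq_le_apply_add_smul (hu : Differentiable ℝ u) (hL : 0 ≤ L)
    (hlip : ∀ a b, ‖∇ u a - ∇ u b‖ ≤ L * ‖a - b‖) (y : E) (η : ℝ) :
    u y + η * (1 - L * η) * ‖∇ u y‖ ^ 2 ≤ u (y + η • ∇ u y) := by
  have h := abs_le.1 (abs_sub_sub_inner_gradient_le hu hL hlip y (y + η • ∇ u y))
  rw [add_sub_cancel_left, real_inner_smul_right, real_inner_self_eq_norm_sq, norm_smul,
    Real.norm_eq_abs, mul_pow, sq_abs] at h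
  nlinarith [h.1]

variable (u) in
noncomputable def gradAscent (η : ℝ) (y : E) : ℕ → E
  | 0 => y
  | k + 1 => gradAscent η y k + η • ∇ u (gradAscent η y k)

variable {μ M η : ℝ}

theorem mul_norm_gradient_le_sqrt_sub_sqrt (hu : Differentiable ℝ u) (hL : 0 ≤ L)
    (hlip : ∀ a b, ‖∇ u a - ∇ u b‖ ≤ L * ‖a - b‖) (hμ : 0 < μ) (hη : 0 ≤ η) (hLη : L * η ≤ 1)
    (hub : ∀ w, u w ≤ M) (hPL : ∀ w, 2 * μ * (M - u w) ≤ ‖∇ u w‖ ^ 2) (w : E) :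
    η * (1 - L * η) * ‖∇ u w‖ ≤
      √(2 * (M - u w) / μ) - √(2 * (M - u (w + η • ∇ u w)) / μ) :=
  mul_le_sqrt_sub_sqrt_of_le_sub hμ (sub_nonneg.2 (hub _))
    (mul_nonneg hη (sub_nonneg.2 hLη)) (norm_nonneg _)
    (by linarith [add_mul_norm_gradient_sq_le_apply_add_smul hu hL hlip w η]) (hPL w)

theorem exists_apply_eq_and_norm_sub_le_of_PL_of_step (hu : Differentiable ℝ u)
    (hL : 0 ≤ L) (hlip : ∀ a b, ‖∇ u a - ∇ u b‖ ≤ L * ‖a - b‖) (hμ : 0 < μ) (hη : 0 < η)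
    (hLη : L * η < 1) (hub : ∀ w, u w ≤ M) (hPL : ∀ w, 2 * μ * (M - u w) ≤ ‖∇ u w‖ ^ 2) (y : E) :
    ∃ z, u z = M ∧ ‖y - z‖ ≤ ‖∇ u y‖ / (μ * (1 - L * η)) := by
  set Y := gradAscent u η y
  have hθ : 0 < 1 - L * η := sub_pos.2 hLη
  have hstep : ∀ k, dist (Y k) (Y (k + 1)) = η * ‖∇ u (Y k)‖ := fun k => by
    rw [dist_comm, dist_eq_norm, show Y (k + 1) = Y k + η • ∇ u (Y k) from rfl,
      add_sub_cancel_left, norm_smul, Real.norm_of_nonneg hη.le]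
  obtain ⟨z, hYz, hdist⟩ := exists_tendsto_dist_le_of_dist_le_sub (Y := Y)
    (s := fun k => √(2 * (M - u (Y k)) / μ) / (1 - L * η)) (fun k => by positivity) fun k => by
      rw [hstep, ← sub_div, le_div_iff₀ hθ, mul_right_comm]
      exact mul_norm_gradient_le_sqrt_sub_sqrt hu hL hlip hμ hη.le hLη.le hub hPL (Y k)
  refine ⟨z, ?_, ?_⟩
  · have hgrad : Tendsto (fun k => ∇ u (Y k)) atTop (𝓝 (∇ u z)) :=
      ((LipschitzWith.of_dist_le_mul (K := ⟨L, hL⟩) fun a b => by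
        rw [dist_eq_norm, dist_eq_norm]; exact hlip a b).continuous.tendsto z).comp hYz
    have hgrad0 : Tendsto (fun k => ∇ u (Y k)) atTop (𝓝 0) := by
      have : Tendsto (fun k => η⁻¹ • (Y (k + 1) - Y k)) atTop (𝓝 (η⁻¹ • (z - z))) :=
        ((hYz.comp (tendsto_add_atTop_nat 1)).sub hYz).const_smul η⁻¹
      refine (this.congr fun k => ?_).trans (by simp)
      simp [Y, gradAscent, hη.ne']
    have := hPL z
    rw [tendsto_nhds_unique hgrad hgrad0, norm_zero] at this
    nlinarith [hub z]
  · rw [← dist_eq_norm]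
    refine hdist.trans ?_
    rw [← div_div]
    exact div_le_div_of_nonneg_right (sqrt_two_mul_div_le_div hμ (norm_nonneg _) (hPL y)) hθ.le

theorem exists_apply_eq_and_norm_sub_le_of_PL [ProperSpace E] (hu : Differentiable ℝ u)
    (hL : 0 ≤ L) (hlip : ∀ a b, ‖∇ u a - ∇ u b‖ ≤ L * ‖a - b‖) (hμ : 0 < μ)
    (hub : ∀ w, u w ≤ M) (hPL : ∀ w, 2 * μ * (M - u w) ≤ ‖∇ u w‖ ^ 2) (y : E) :
    ∃ z, u z = M ∧ ‖y - z‖ ≤ ‖∇ u y‖ / μ := by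
  have hsmall : ∀ᶠ η in 𝓝[>] (0 : ℝ), 0 < η ∧ L * η < 1 :=
    eventually_mem_nhdsWithin.and <| nhdsWithin_le_nhds <|
      ((continuous_const_mul L).tendsto' 0 0 (mul_zero L)).eventually (gt_mem_nhds one_pos)
  have hsol : ∀ᶠ η in 𝓝[>] (0 : ℝ), ∃ z, u z = M ∧ ‖y - z‖ ≤ ‖∇ u y‖ / (μ * (1 - L * η)) :=
    hsmall.mono fun η hη =>
      exists_apply_eq_and_norm_sub_le_of_PL_of_step hu hL hlip hμ hη.1 hη.2 hub hPL y
  obtain ⟨-, z₀, hz₀, -⟩ := hsol.exists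
  obtain ⟨z, hz, hyz⟩ := (isClosed_eq hu.continuous continuous_const).exists_infDist_eq_dist
    (s := {z | u z = M}) ⟨z₀, hz₀⟩ y
  refine ⟨z, hz, ?_⟩
  rw [← dist_eq_norm, ← hyz]
  have hlim : Tendsto (fun η => ‖∇ u y‖ / (μ * (1 - L * η))) (𝓝[>] 0) (𝓝 (‖∇ u y‖ / μ)) := by
    have : Tendsto (fun η => ‖∇ u y‖ / (μ * (1 - L * η))) (𝓝 0) (𝓝 (‖∇ u y‖ / (μ * (1 - 0)))) :=
      tendsto_const_nhds.div (tendsto_const_nhds.mul (tendsto_const_nhds.sub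
        ((continuous_const_mul L).tendsto' 0 0 (mul_zero L)))) (by simpa using hμ.ne')
    simpa using this.mono_left nhdsWithin_le_nhds
  refine ge_of_tendsto hlim ?_
  filter_upwards [hsol] with η ⟨z, hz, hyz⟩
  exact (infDist_le_dist_of_mem (s := {z | u z = M}) hz).trans ((dist_eq_norm y z).trans_le hyz)

end GradientAscent

theorem gradient_x_norm_bound_general {d1 d2 : ℕ}
    (f : EuclideanSpace ℝ (Fin d1) → EuclideanSpace ℝ (Fin d2) → ℝ)
    (Φ : EuclideanSpace ℝ (Fin d1) → ℝ) (l μ : ℝ) (hμ : 0 < μ)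
    (hdiff : Differentiable ℝ (fun p : EuclideanSpace ℝ (Fin d1) × EuclideanSpace ℝ (Fin d2) =>
      f p.1 p.2))
    (hlipx : ∀ x1 y1 x2 y2, ‖gradx f x1 y1 - gradx f x2 y2‖ ≤ l * (‖x1 - x2‖ + ‖y1 - y2‖))
    (hlipy : ∀ x1 y1 x2 y2, ‖grady f x1 y1 - grady f x2 y2‖ ≤ l * (‖x1 - x2‖ + ‖y1 - y2‖))
    (hmax : ∀ x, IsGreatest (Set.range (f x)) (Φ x))
    (hPL : ∀ x y, ‖grady f x y‖ ^ 2 ≥ 2 * μ * (Φ x - f x y))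
    (hΦgrad : ∀ x ystar, f x ystar = Φ x → gradient Φ x = gradx f x ystar) :
    ∀ x y, ‖gradx f x y‖ ^ 2 ≤ 2 * (l / μ) ^ 2 * ‖grady f x y‖ ^ 2 + 2 * ‖gradient Φ x‖ ^ 2 := by
  intro x y
  have hu : Differentiable ℝ (f x) :=
    hdiff.comp ((differentiable_const x).prodMk differentiable_id)
  have hl : ∀ r : ℝ, 0 ≤ r → l * r ≤ |l| * r := fun r hr =>
    mul_le_mul_of_nonneg_right (le_abs_self l) hr
  have hlip : ∀ a b, ‖grady f x a - grady f x b‖ ≤ |l| * ‖a - b‖ := fun a b => by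
    simpa using (hlipy x a x b).trans (hl _ (by positivity))
  obtain ⟨z, hz, hyz⟩ := exists_apply_eq_and_norm_sub_le_of_PL hu (abs_nonneg l) hlip hμ
    (fun w => (hmax x).2 ⟨w, rfl⟩) (hPL x) y
  have hbound : ‖gradx f x y‖ ≤ ‖gradient Φ x‖ + |l| / μ * ‖grady f x y‖ := calc
    ‖gradx f x y‖ ≤ ‖gradx f x z‖ + ‖gradx f x y - gradx f x z‖ :=
        norm_le_norm_add_norm_sub' _ _
    _ ≤ ‖gradient Φ x‖ + |l| * ‖y - z‖ := by
      rw [hΦgrad x z hz]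
      gcongr
      simpa using (hlipx x y x z).trans (hl _ (by positivity))
    _ ≤ ‖gradient Φ x‖ + |l| / μ * ‖grady f x y‖ := by
      rw [div_mul_comm, mul_comm (|l|)]
      gcongr
      exact hyz
  calc ‖gradx f x y‖ ^ 2 ≤ (‖gradient Φ x‖ + |l| / μ * ‖grady f x y‖) ^ 2 :=
        pow_le_pow_left₀ (norm_nonneg _) hbound 2
    _ ≤ 2 * (‖gradient Φ x‖ ^ 2 + (|l| / μ * ‖grady f x y‖) ^ 2) := add_sq_le
    _ = 2 * (l / μ) ^ 2 * ‖grady f x y‖ ^ 2 + 2 * ‖gradient Φ x‖ ^ 2 := by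
      rw [mul_pow, div_pow, sq_abs, ← div_pow]; ring

/-- Under the PL condition in `y` with constant `μ > 0`, for `f` with `l`-Lipschitz gradients,
`‖∇ₓ f(x,y)‖² ≤ 2κ² ‖∇_y f(x,y)‖² + 2‖∇Φ(x)‖²` with `κ = l/μ`. -/
theorem gradient_x_norm_bound {d1 d2 : ℕ}
    (f : EuclideanSpace ℝ (Fin d1) → EuclideanSpace ℝ (Fin d2) → ℝ)
    (Φ : EuclideanSpace ℝ (Fin d1) → ℝ) (l μ : ℝ) (hμ : 0 < μ)
    (hdiff : Differentiable ℝ (fun p : EuclideanSpace ℝ (Fin d1) × EuclideanSpace ℝ (Fin d2) =>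
      f p.1 p.2))
    (hlipx : ∀ x1 y1 x2 y2, ‖gradx f x1 y1 - gradx f x2 y2‖ ≤ l * (‖x1 - x2‖ + ‖y1 - y2‖))
    (hlipy : ∀ x1 y1 x2 y2, ‖grady f x1 y1 - grady f x2 y2‖ ≤ l * (‖x1 - x2‖ + ‖y1 - y2‖))
    (hmax : ∀ x, IsGreatest (Set.range (f x)) (Φ x))
    (hPL : ∀ x y, ‖grady f x y‖ ^ 2 ≥ 2 * μ * (Φ x - f x y))
    (hΦdiff : Differentiable ℝ Φ)
    (hΦgrad : ∀ x ystar, f x ystar = Φ x → gradient Φ x = gradx f x ystar) :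
    ∀ x y, ‖gradx f x y‖ ^ 2 ≤ 2 * (l / μ) ^ 2 * ‖grady f x y‖ ^ 2 + 2 * ‖gradient Φ x‖ ^ 2 :=
  gradient_x_norm_bound_general f Φ l μ hμ hdiff hlipx hlipy hmax hPL hΦgrad
end

section
/- Let f : ℝ^{d1} × ℝ^{d2} → ℝ be differentiable with l-Lipschitz gradients and let μ1 > 0. For u drawn uniformly from the unit sphere S^{d1−1} ⊂ ℝ^{d1}, the zeroth-order gradient estimator is ĝ(x,y;u) = (d1/μ1)(f(x + μ1 u, y) − f(x,y)) u. Then for all x, y: E_{u ~ U(S^{d1−1})} ‖ ĝ(x,y;u) ‖² ≤ 2 d1 ‖∇_x f(x,y)‖² + μ1² d1² l² / 2. -/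
/-!
With `Δ = f (x + μ u, y) - f (x, y)`, the descent lemma for `l`-smooth functions gives
`Δ = μ ⟪∇ₓ f, u⟫ + r` with `|r| ≤ l μ² / 2`, so on the unit sphere
`‖ĝ‖² = (d/μ)² Δ² ≤ 2 d² ⟪∇ₓ f, u⟫² + d² l² μ² / 2`. For a rotation-invariant law on the sphere,
`E ⟪g, u⟫²` depends only on `‖g‖` (a reflection maps `g` to any vector of the same norm), and
Parseval's identity over an orthonormal basis gives `d · E ⟪g, u⟫² = ‖g‖²`.
-/

open MeasureTheory Metric

open scoped RealInnerProductSpace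

theorem sq_div_mul_le_of_abs_sub_mul_le {d μ l t Δ : ℝ} (h : |Δ - μ * t| ≤ l * μ ^ 2 / 2) :
    (d / μ * Δ) ^ 2 ≤ 2 * d ^ 2 * t ^ 2 + d ^ 2 * l ^ 2 * μ ^ 2 / 2 := by
  rcases eq_or_ne μ 0 with rfl | hμ
  -- `d / 0 = 0`, so the left side vanishes
  · rw [div_zero, zero_mul, zero_pow two_ne_zero]
    positivity
  have hrem : (Δ - μ * t) ^ 2 ≤ (l * μ ^ 2 / 2) ^ 2 := sq_le_sq' (abs_le.1 h).1 (abs_le.1 h).2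
  have hΔ : Δ ^ 2 ≤ 2 * (μ * t) ^ 2 + 2 * (l * μ ^ 2 / 2) ^ 2 := by
    nlinarith [sq_nonneg (Δ - 2 * μ * t)]
  calc (d / μ * Δ) ^ 2 = d ^ 2 / μ ^ 2 * Δ ^ 2 := by ring
    _ ≤ d ^ 2 / μ ^ 2 * (2 * (μ * t) ^ 2 + 2 * (l * μ ^ 2 / 2) ^ 2) := by gcongr
    _ = 2 * d ^ 2 * t ^ 2 + d ^ 2 * l ^ 2 * μ ^ 2 / 2 := by field_simp

section LipschitzGradient

variable {E : Type*} [NormedAddCommGroup E] [InnerProductSpace ℝ E] [CompleteSpace E]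

theorem abs_sub_sub_inner_gradient_le_s6 {f : E → ℝ} {L : ℝ} (hf : Differentiable ℝ f)
    (hlip : ∀ a b, ‖gradient f a - gradient f b‖ ≤ L * ‖a - b‖) (x h : E) :
    |f (x + h) - f x - ⟪gradient f x, h⟫| ≤ L * ‖h‖ ^ 2 / 2 := by
  set r : ℝ → ℝ := fun t => f (x + t • h) - f x - t * ⟪gradient f x, h⟫
  have hr : ∀ t, HasDerivAt r ⟪gradient f (x + t • h) - gradient f x, h⟫ t := by
    intro t
    have hline : HasDerivAt (fun s : ℝ => x + s • h) h t := by
      simpa using ((hasDerivAt_id t).smul_const h).const_add x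
    have hcomp := (hf (x + t • h)).hasGradientAt.hasFDerivAt.comp_hasDerivAt t hline
    rw [InnerProductSpace.toDual_apply_apply] at hcomp
    rw [inner_sub_left]
    exact (hcomp.sub_const (f x)).sub (hasDerivAt_mul_const _)
  have hbound : ∀ t ∈ Set.Ico (0 : ℝ) 1,
      ‖⟪gradient f (x + t • h) - gradient f x, h⟫‖ ≤ L * ‖h‖ ^ 2 * t := by
    intro t ht
    calc ‖⟪gradient f (x + t • h) - gradient f x, h⟫‖
        ≤ ‖gradient f (x + t • h) - gradient f x‖ * ‖h‖ := norm_inner_le_norm _ _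
      _ ≤ L * ‖x + t • h - x‖ * ‖h‖ := by gcongr; exact hlip _ _
      _ = L * ‖h‖ ^ 2 * t := by
        rw [add_sub_cancel_left, norm_smul, Real.norm_of_nonneg ht.1]; ring
  have hB : ∀ t, HasDerivAt (fun t => L * ‖h‖ ^ 2 * t ^ 2 / 2) (L * ‖h‖ ^ 2 * t) t := by
    intro t
    refine (((hasDerivAt_pow 2 t).const_mul (L * ‖h‖ ^ 2)).div_const 2).congr_deriv ?_
    norm_num
    ring
  have hfence := image_norm_le_of_norm_deriv_right_le_deriv_boundary
    (fun t _ => (hr t).continuousAt.continuousWithinAt) (fun t _ => (hr t).hasDerivWithinAt)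
    (by simp [r]) hB hbound (Set.right_mem_Icc.2 zero_le_one)
  simpa [r] using hfence

theorem norm_finiteDifference_smul_sq_le {f : E → ℝ} {L : ℝ} (hf : Differentiable ℝ f)
    (hlip : ∀ a b, ‖gradient f a - gradient f b‖ ≤ L * ‖a - b‖) (x : E) {u : E} (hu : ‖u‖ = 1)
    (c μ : ℝ) :
    ‖(c / μ * (f (x + μ • u) - f x)) • u‖ ^ 2 ≤
      2 * c ^ 2 * ⟪gradient f x, u⟫ ^ 2 + c ^ 2 * L ^ 2 * μ ^ 2 / 2 := by
  have htaylor := abs_sub_sub_inner_gradient_le_s6 hf hlip x (μ • u)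
  rw [norm_smul, Real.norm_eq_abs, hu, mul_one, sq_abs, real_inner_smul_right] at htaylor
  rw [norm_smul, hu, mul_one, Real.norm_eq_abs, sq_abs]
  exact sq_div_mul_le_of_abs_sub_mul_le htaylor

end LipschitzGradient

section SphereMoment

variable {E : Type*} [NormedAddCommGroup E] [InnerProductSpace ℝ E]
  [MeasurableSpace E] [BorelSpace E] {ν : Measure E}

theorem integrable_inner_sq [IsFiniteMeasure ν] (hν : ∀ᵐ u ∂ν, ‖u‖ = 1) (v : E) :
    Integrable (fun u => ⟪v, u⟫ ^ 2) ν := by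
  refine (integrable_const (‖v‖ ^ 2)).mono' (by fun_prop) ?_
  filter_upwards [hν] with u hu
  rw [Real.norm_of_nonneg (sq_nonneg _), ← sq_abs]
  gcongr
  simpa [hu] using abs_real_inner_le_norm v u

theorem integral_inner_sq_eq_of_norm_eq
    (hinv : ∀ T : E ≃ₗᵢ[ℝ] E, ν.map T = ν) {v w : E} (h : ‖v‖ = ‖w‖) :
    ∫ u, ⟪v, u⟫ ^ 2 ∂ν = ∫ u, ⟪w, u⟫ ^ 2 ∂ν := by
  set T : E ≃ₗᵢ[ℝ] E := (ℝ ∙ (v - w))ᗮ.reflection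
  have hT : MeasurePreserving T ν ν := ⟨T.continuous.measurable, hinv T⟩
  have hTv : T v = w := Submodule.reflection_sub h
  calc ∫ u, ⟪v, u⟫ ^ 2 ∂ν = ∫ u, ⟪T v, T u⟫ ^ 2 ∂ν := by
        simp only [LinearIsometryEquiv.inner_map_map]
    _ = ∫ u, ⟪w, u⟫ ^ 2 ∂ν := by
        rw [hTv]
        exact hT.integral_comp T.toHomeomorph.measurableEmbedding (fun u => ⟪w, u⟫ ^ 2)

variable [FiniteDimensional ℝ E] [IsProbabilityMeasure ν]

theorem finrank_mul_integral_inner_sq_of_norm_eq_one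
    (hν : ∀ᵐ u ∂ν, ‖u‖ = 1) (hinv : ∀ T : E ≃ₗᵢ[ℝ] E, ν.map T = ν) {v : E} (hv : ‖v‖ = 1) :
    Module.finrank ℝ E * ∫ u, ⟪v, u⟫ ^ 2 ∂ν = 1 := by
  set b := stdOrthonormalBasis ℝ E
  have hparseval : ∫ u, ∑ i, ⟪b i, u⟫ ^ 2 ∂ν = 1 := by
    have hsum : (fun u => ∑ i, ⟪b i, u⟫ ^ 2) =ᵐ[ν] fun _ => 1 :=
      hν.mono fun u hu => by simp [b.sum_sq_inner_right, hu]
    simp [integral_congr_ae hsum]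
  rw [integral_finsetSum _ fun i _ => integrable_inner_sq hν (b i)] at hparseval
  rw [← hparseval, Finset.sum_congr rfl fun i _ =>
      integral_inner_sq_eq_of_norm_eq hinv ((b.norm_eq_one i).trans hv.symm)]
  simp

theorem finrank_mul_integral_inner_sq
    (hν : ∀ᵐ u ∂ν, ‖u‖ = 1) (hinv : ∀ T : E ≃ₗᵢ[ℝ] E, ν.map T = ν) (g : E) :
    Module.finrank ℝ E * ∫ u, ⟪g, u⟫ ^ 2 ∂ν = ‖g‖ ^ 2 := by
  rcases eq_or_ne g 0 with rfl | hg
  · simp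
  have hunit : ‖‖g‖⁻¹ • g‖ = 1 := norm_smul_inv_norm hg
  have hscale : ∀ u, ⟪g, u⟫ ^ 2 = ‖g‖ ^ 2 * ⟪‖g‖⁻¹ • g, u⟫ ^ 2 := fun u => by
    rw [real_inner_smul_left]
    field_simp
  simp only [hscale, integral_const_mul]
  rw [mul_left_comm, finrank_mul_integral_inner_sq_of_norm_eq_one hν hinv hunit, mul_one]

end SphereMoment

theorem zeroth_order_estimator_second_moment_general {d1 d2 : ℕ}
    (f : EuclideanSpace ℝ (Fin d1) → EuclideanSpace ℝ (Fin d2) → ℝ)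
    (l μ1 : ℝ)
    (hdiff : Differentiable ℝ (fun p : EuclideanSpace ℝ (Fin d1) × EuclideanSpace ℝ (Fin d2) =>
      f p.1 p.2))
    (hlipx : ∀ x1 y1 x2 y2, ‖gradx f x1 y1 - gradx f x2 y2‖ ≤ l * (‖x1 - x2‖ + ‖y1 - y2‖))
    (ν : Measure (EuclideanSpace ℝ (Fin d1))) [IsProbabilityMeasure ν]
    (hsupp : ν (Metric.sphere (0 : EuclideanSpace ℝ (Fin d1)) 1)ᶜ = 0)
    (hinv : ∀ T : EuclideanSpace ℝ (Fin d1) ≃ₗᵢ[ℝ] EuclideanSpace ℝ (Fin d1), ν.map T = ν) :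
    ∀ (x : EuclideanSpace ℝ (Fin d1)) (y : EuclideanSpace ℝ (Fin d2)),
      ∫ u, ‖(((d1 : ℝ) / μ1) * (f (x + μ1 • u) y - f x y)) • u‖ ^ 2 ∂ν ≤
        2 * (d1 : ℝ) * ‖gradx f x y‖ ^ 2 + μ1 ^ 2 * (d1 : ℝ) ^ 2 * l ^ 2 / 2 := by
  intro x y
  set g := gradx f x y
  have hdiffx : Differentiable ℝ (fun x' => f x' y) :=
    hdiff.comp (differentiable_id.prodMk (differentiable_const y))
  have hlip : ∀ a b, ‖gradient (fun x' => f x' y) a - gradient (fun x' => f x' y) b‖ ≤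
      l * ‖a - b‖ := fun a b => by simpa [gradx] using hlipx a y b y
  have hsphere : ∀ᵐ u ∂ν, ‖u‖ = 1 :=
    (ae_iff.2 hsupp).mono fun u hu => mem_sphere_zero_iff_norm.1 hu
  have hmoment : (d1 : ℝ) * ∫ u, ⟪g, u⟫ ^ 2 ∂ν = ‖g‖ ^ 2 := by
    simpa using finrank_mul_integral_inner_sq hsphere hinv g
  have hpoint : ∀ᵐ u ∂ν, ‖(((d1 : ℝ) / μ1) * (f (x + μ1 • u) y - f x y)) • u‖ ^ 2 ≤
      2 * (d1 : ℝ) ^ 2 * ⟪g, u⟫ ^ 2 + (d1 : ℝ) ^ 2 * l ^ 2 * μ1 ^ 2 / 2 :=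
    hsphere.mono fun u hu => norm_finiteDifference_smul_sq_le hdiffx hlip x hu _ _
  have hint : Integrable (fun u => 2 * (d1 : ℝ) ^ 2 * ⟪g, u⟫ ^ 2) ν :=
    (integrable_inner_sq hsphere g).const_mul _
  calc ∫ u, ‖(((d1 : ℝ) / μ1) * (f (x + μ1 • u) y - f x y)) • u‖ ^ 2 ∂ν
      ≤ ∫ u, (2 * (d1 : ℝ) ^ 2 * ⟪g, u⟫ ^ 2 + (d1 : ℝ) ^ 2 * l ^ 2 * μ1 ^ 2 / 2) ∂ν :=
        integral_mono_of_nonneg (ae_of_all _ fun _ => by positivity)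
          (hint.add (integrable_const _)) hpoint
    _ = 2 * (d1 : ℝ) * ((d1 : ℝ) * ∫ u, ⟪g, u⟫ ^ 2 ∂ν) + μ1 ^ 2 * (d1 : ℝ) ^ 2 * l ^ 2 / 2 := by
        rw [integral_add hint (integrable_const _), integral_const_mul]
        simp only [integral_const, probReal_univ, smul_eq_mul, one_mul]
        ring
    _ = 2 * (d1 : ℝ) * ‖g‖ ^ 2 + μ1 ^ 2 * (d1 : ℝ) ^ 2 * l ^ 2 / 2 := by rw [hmoment]

/-- Second-moment bound for the uniform-smoothing zeroth-order gradient estimator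
`ĝ(x,y;u) = (d1/μ1)(f(x + μ1 u, y) − f(x,y)) u`, where `u` is drawn from the uniform
(i.e. rotation-invariant) probability distribution `ν` on the unit sphere of `ℝ^{d1}`:
`E_u ‖ĝ(x,y;u)‖² ≤ 2 d1 ‖∇ₓ f(x,y)‖² + μ1² d1² l² / 2`. -/
theorem zeroth_order_estimator_second_moment {d1 d2 : ℕ}
    (f : EuclideanSpace ℝ (Fin d1) → EuclideanSpace ℝ (Fin d2) → ℝ)
    (l μ1 : ℝ) (hμ1 : 0 < μ1)
    (hdiff : Differentiable ℝ (fun p : EuclideanSpace ℝ (Fin d1) × EuclideanSpace ℝ (Fin d2) =>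
      f p.1 p.2))
    (hlipx : ∀ x1 y1 x2 y2, ‖gradx f x1 y1 - gradx f x2 y2‖ ≤ l * (‖x1 - x2‖ + ‖y1 - y2‖))
    (hlipy : ∀ x1 y1 x2 y2,
      ‖gradient (fun y' => f x1 y') y1 - gradient (fun y' => f x2 y') y2‖ ≤
        l * (‖x1 - x2‖ + ‖y1 - y2‖))
    (ν : Measure (EuclideanSpace ℝ (Fin d1))) [IsProbabilityMeasure ν]
    (hsupp : ν (Metric.sphere (0 : EuclideanSpace ℝ (Fin d1)) 1)ᶜ = 0)
    (hinv : ∀ T : EuclideanSpace ℝ (Fin d1) ≃ₗᵢ[ℝ] EuclideanSpace ℝ (Fin d1), ν.map T = ν) :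
    ∀ (x : EuclideanSpace ℝ (Fin d1)) (y : EuclideanSpace ℝ (Fin d2)),
      ∫ u, ‖(((d1 : ℝ) / μ1) * (f (x + μ1 • u) y - f x y)) • u‖ ^ 2 ∂ν ≤
        2 * (d1 : ℝ) * ‖gradx f x y‖ ^ 2 + μ1 ^ 2 * (d1 : ℝ) ^ 2 * l ^ 2 / 2 :=
  zeroth_order_estimator_second_moment_general f l μ1 hdiff hlipx ν hsupp hinv
end
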